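/- For every integer n ≥ 2, the function p ↦ 1 + p² − p^{n+1} on [0,1] attains its maximum at p = (2/(n+1))^{1/(n−1)}, with maximum value cₙ := 1 + (2/(n+1))^{2/(n−1)}·((n−1)/(n+1)). Moreover, cₙ → 2 as n → ∞. -/

import Mathlib

noncomputable section

/-- `cₙ = 1 + (2/(n+1))^{2/(n−1)}·((n−1)/(n+1))`. -/
def cRatio (n : ℕ) : ℝ :=
  1 + (2 / ((n : ℝ) + 1)) ^ ((2 : ℝ) / ((n : ℝ) - 1)) * (((n : ℝ) - 1) / ((n : ℝ) + 1))

/-!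
With `q = p^(n-1)` and `x = 2/(n+1)` one has `p² - p^(n+1) = q^(x/(1-x)) (1 - q)`, since
`x/(1-x) = 2/(n-1)`. Weighted AM-GM with weights `x, 1 - x` applied to `q/x` and `(1-q)/(1-x)`
gives `q^x (1-q)^(1-x) ≤ x^x (1-x)^(1-x)`, so the maximum is attained at `q = x`, i.e. at
`p = x^(1/(n-1))`. For the limit, `(2/(n+1))^(2/(n-1)) → 1` because `y^(c/y) → 1`.
-/

open Real Filter Topology

namespace Real

theorem rpow_mul_one_sub_rpow_le {x q : ℝ} (hx₀ : 0 < x) (hx₁ : x < 1) (hq₀ : 0 ≤ q)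
    (hq₁ : q ≤ 1) : q ^ x * (1 - q) ^ (1 - x) ≤ x ^ x * (1 - x) ^ (1 - x) := by
  have hx₁' : 0 < 1 - x := sub_pos.2 hx₁
  have hq₁' : 0 ≤ 1 - q := sub_nonneg.2 hq₁
  have amgm := geom_mean_le_arith_mean2_weighted hx₀.le hx₁'.le (div_nonneg hq₀ hx₀.le)
    (div_nonneg hq₁' hx₁'.le) (add_sub_cancel x 1)
  rwa [mul_div_cancel₀ _ hx₀.ne', mul_div_cancel₀ _ hx₁'.ne', add_sub_cancel,
    div_rpow hq₀ hx₀.le, div_rpow hq₁' hx₁'.le, div_mul_div_comm,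
    div_le_one (by positivity)] at amgm

theorem rpow_div_one_sub_mul_one_sub_le {x q : ℝ} (hx₀ : 0 < x) (hx₁ : x < 1) (hq₀ : 0 ≤ q)
    (hq₁ : q ≤ 1) : q ^ (x / (1 - x)) * (1 - q) ≤ x ^ (x / (1 - x)) * (1 - x) := by
  have hx₁' : 0 < 1 - x := sub_pos.2 hx₁
  have hq₁' : 0 ≤ 1 - q := sub_nonneg.2 hq₁
  have key := rpow_le_rpow (by positivity) (rpow_mul_one_sub_rpow_le hx₀ hx₁ hq₀ hq₁)
    (inv_nonneg.2 hx₁'.le)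
  rwa [mul_rpow (by positivity) (by positivity), mul_rpow (by positivity) (by positivity),
    ← rpow_mul hq₀, ← rpow_mul hq₁', ← rpow_mul hx₀.le, ← rpow_mul hx₁'.le,
    mul_inv_cancel₀ hx₁'.ne', rpow_one, rpow_one, ← div_eq_mul_inv] at key

theorem pow_rpow_two_div_natCast {p : ℝ} (hp : 0 ≤ p) {m : ℕ} (hm : m ≠ 0) :
    (p ^ m) ^ ((2 : ℝ) / m) = p ^ 2 := by
  rw [div_eq_inv_mul, rpow_mul (by positivity), pow_rpow_inv_natCast hp hm, rpow_two]

theorem tendsto_two_div_add_one_rpow_two_div_sub_one :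
    Tendsto (fun y : ℝ => (2 / (y + 1)) ^ (2 / (y - 1))) atTop (𝓝 1) := by
  have hsub : Tendsto (fun y : ℝ => y - 1) atTop atTop :=
    tendsto_atTop_add_const_right _ (-1) tendsto_id
  have hadd : Tendsto (fun y : ℝ => y + 1) atTop atTop :=
    tendsto_atTop_add_const_right _ 1 tendsto_id
  have hnum : Tendsto (fun y : ℝ => (2 : ℝ) ^ (2 / (y - 1))) atTop (𝓝 1) := by
    simpa [Function.comp_def] using
      ((continuous_const_rpow two_ne_zero).tendsto 0).comp (tendsto_const_nhds.div_atTop hsub)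
  have hden : Tendsto (fun y : ℝ => (y + 1) ^ (2 / (y - 1))) atTop (𝓝 1) := by
    convert (tendsto_rpow_div_mul_add 2 1 (-2) one_ne_zero.symm).comp hadd using 2 with y
    simp only [Function.comp_apply]
    ring_nf
  have hquot := hnum.div hden one_ne_zero
  rw [div_one] at hquot
  refine hquot.congr' ?_
  filter_upwards [eventually_gt_atTop 0] with y hy
  rw [div_rpow zero_le_two (by positivity)]
  rfl

end Real

theorem one_sub_two_div_add_one {y : ℝ} (hy : y + 1 ≠ 0) :
    1 - 2 / (y + 1) = (y - 1) / (y + 1) := by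
  field_simp
  ring

theorem two_div_add_one_div_one_sub {y : ℝ} (hy : y + 1 ≠ 0) :
    2 / (y + 1) / (1 - 2 / (y + 1)) = 2 / (y - 1) := by
  rw [one_sub_two_div_add_one hy, div_div_div_cancel_right₀ hy]

section

variable {n : ℕ}

theorem one_add_sq_sub_pow_le_cRatio (hn : 2 ≤ n) {p : ℝ} (hp₀ : 0 ≤ p) (hp₁ : p ≤ 1) :
    1 + p ^ 2 - p ^ (n + 1) ≤ cRatio n := by
  have hn' : (2 : ℝ) ≤ n := by exact_mod_cast hn
  have hsq : (p ^ (n - 1)) ^ (2 / ((n : ℝ) - 1)) = p ^ 2 := by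
    rw [← Nat.cast_pred (by omega)]
    exact pow_rpow_two_div_natCast hp₀ (by omega)
  have key := rpow_div_one_sub_mul_one_sub_le (x := 2 / ((n : ℝ) + 1)) (by positivity)
    (by rw [div_lt_one (by positivity)]; linarith) (pow_nonneg hp₀ (n - 1)) (pow_le_one₀ hp₀ hp₁)
  rw [two_div_add_one_div_one_sub (by positivity), hsq,
    one_sub_two_div_add_one (by positivity)] at key
  have hsplit : 1 + p ^ 2 - p ^ (n + 1) = 1 + p ^ 2 * (1 - p ^ (n - 1)) := by
    rw [show n + 1 = 2 + (n - 1) by omega, pow_add]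
    ring
  rw [cRatio, hsplit]
  linarith

theorem two_div_add_one_rpow_mem_Icc (hn : 2 ≤ n) :
    (2 / ((n : ℝ) + 1)) ^ ((1 : ℝ) / ((n : ℝ) - 1)) ∈ Set.Icc (0 : ℝ) 1 := by
  have hn' : (2 : ℝ) ≤ n := by exact_mod_cast hn
  exact ⟨rpow_nonneg (by positivity) _, rpow_le_one (by positivity)
    (by rw [div_le_one (by positivity)]; linarith) (div_nonneg zero_le_one (by linarith))⟩

theorem one_add_sq_sub_pow_two_div_add_one_rpow (hn : 2 ≤ n) :
    1 + ((2 / ((n : ℝ) + 1)) ^ ((1 : ℝ) / ((n : ℝ) - 1))) ^ 2 -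
        ((2 / ((n : ℝ) + 1)) ^ ((1 : ℝ) / ((n : ℝ) - 1))) ^ (n + 1) = cRatio n := by
  have hm : ((n - 1 : ℕ) : ℝ) = n - 1 := Nat.cast_pred (by omega)
  set r := (2 / ((n : ℝ) + 1)) ^ ((1 : ℝ) / ((n : ℝ) - 1)) with hr
  have hr_pow : r ^ (n - 1) = 2 / ((n : ℝ) + 1) := by
    rw [hr, ← hm, one_div, rpow_inv_natCast_pow (by positivity) (by omega)]
  have hr_sq : r ^ 2 = (2 / ((n : ℝ) + 1)) ^ (2 / ((n : ℝ) - 1)) := by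
    rw [hr, ← rpow_natCast, ← rpow_mul (by positivity)]
    congr 1
    push_cast
    ring
  rw [cRatio, ← one_sub_two_div_add_one (by positivity), show n + 1 = 2 + (n - 1) by omega,
    pow_add, hr_pow, hr_sq]
  ring

theorem tendsto_cRatio : Tendsto cRatio atTop (𝓝 2) := by
  have hbase := tendsto_two_div_add_one_rpow_two_div_sub_one.comp tendsto_natCast_atTop_atTop
  have hratio : Tendsto (fun n : ℕ => ((n : ℝ) - 1) / ((n : ℝ) + 1)) atTop (𝓝 1) := by
    convert tendsto_add_mul_div_add_mul_atTop_nhds (-1 : ℝ) 1 1 one_ne_zero using 2 <;> ring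
  have hlim := (hbase.mul hratio).const_add 1
  rw [mul_one, one_add_one_eq_two] at hlim
  exact hlim

end

/-- for every `n ≥ 2`, the function `p ↦ 1 + p² − p^{n+1}` on `[0,1]`
attains its maximum at `p = (2/(n+1))^{1/(n−1)}`, with maximum value `cₙ`; moreover
`cₙ → 2` as `n → ∞`. -/
theorem max_one_add_sq_sub_pow_eq_cRatio :
    (∀ n : ℕ, 2 ≤ n →
      (∀ p ∈ Set.Icc (0:ℝ) 1, 1 + p ^ 2 - p ^ (n + 1) ≤ cRatio n) ∧
      (2 / ((n : ℝ) + 1)) ^ ((1 : ℝ) / ((n : ℝ) - 1)) ∈ Set.Icc (0:ℝ) 1 ∧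
      1 + ((2 / ((n : ℝ) + 1)) ^ ((1 : ℝ) / ((n : ℝ) - 1))) ^ 2 -
          ((2 / ((n : ℝ) + 1)) ^ ((1 : ℝ) / ((n : ℝ) - 1))) ^ (n + 1) = cRatio n) ∧
    Filter.Tendsto cRatio Filter.atTop (nhds 2) :=
  ⟨fun _ hn => ⟨fun _ hp => one_add_sq_sub_pow_le_cRatio hn hp.1 hp.2,
    two_div_add_one_rpow_mem_Icc hn, one_add_sq_sub_pow_two_div_add_one_rpow hn⟩, tendsto_cRatio⟩
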